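/- arXiv:1912.04689 — 3 statements merged into one kernel-verified Lean document; each statement's English description precedes it below -/
import Mathlib

section
/- Let V be a finite-dimensional complex vector space and σ : V ⊗ V → V ⊗ V a linear map satisfying σ² = 1 and the braid equation (σ ⊗ id)(id ⊗ σ)(σ ⊗ id) = (id ⊗ σ)(σ ⊗ id)(id ⊗ σ) on V ⊗ V ⊗ V. Let P = (1 + σ)/2 and let S = ker(σ - 1) = ran(P). Then the map P₂₃ = id_V ⊗ P restricts to a linear isomorphism from S ⊗ V onto V ⊗ S, where S ⊗ V and V ⊗ S are viewed as subspaces of V ⊗ V ⊗ V. -/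
/-!
`P₂₃` maps into `V ⊗ S` because `σ² = 1` makes `P` land in `S`, and both `S ⊗ V` and `V ⊗ S`
have dimension `dim S · dim V`, so it remains to see that `P₂₃` kills no nonzero `t ∈ S ⊗ V`.
Such a `t` satisfies `σ₁₂ t = t` and `σ₂₃ t = -t`; evaluating the braid relation on `t` then
gives `-t = t`.
-/

open scoped TensorProduct

/-- `σ ⊗ id` on `(V ⊗ V) ⊗ V`. -/
noncomputable def sigma12 {V : Type} [AddCommGroup V] [Module ℂ V]
    (σ : Module.End ℂ (V ⊗[ℂ] V)) : Module.End ℂ ((V ⊗[ℂ] V) ⊗[ℂ] V) :=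
  TensorProduct.map σ LinearMap.id

/-- `id ⊗ σ` on `(V ⊗ V) ⊗ V`, acting on the last two tensor factors. -/
noncomputable def sigma23 {V : Type} [AddCommGroup V] [Module ℂ V]
    (σ : Module.End ℂ (V ⊗[ℂ] V)) : Module.End ℂ ((V ⊗[ℂ] V) ⊗[ℂ] V) :=
  (TensorProduct.assoc ℂ V V V).symm.toLinearMap ∘ₗ
    (TensorProduct.map LinearMap.id σ) ∘ₗ (TensorProduct.assoc ℂ V V V).toLinearMap

/-- The subspace `S ⊗ V` of `(V ⊗ V) ⊗ V`, for `S ⊆ V ⊗ V`. -/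
noncomputable def subSV {V : Type} [AddCommGroup V] [Module ℂ V]
    (S : Submodule ℂ (V ⊗[ℂ] V)) : Submodule ℂ ((V ⊗[ℂ] V) ⊗[ℂ] V) :=
  LinearMap.range (TensorProduct.map S.subtype (LinearMap.id (R := ℂ) (M := V)))

/-- The subspace `V ⊗ S` of `(V ⊗ V) ⊗ V`, for `S ⊆ V ⊗ V`. -/
noncomputable def subVS {V : Type} [AddCommGroup V] [Module ℂ V]
    (S : Submodule ℂ (V ⊗[ℂ] V)) : Submodule ℂ ((V ⊗[ℂ] V) ⊗[ℂ] V) :=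
  LinearMap.range ((TensorProduct.assoc ℂ V V V).symm.toLinearMap ∘ₗ
    TensorProduct.map (LinearMap.id (R := ℂ) (M := V)) S.subtype)


theorem Module.End.eq_zero_of_braid_of_apply_eq_self_of_apply_eq_neg {R M : Type*} [Semiring R]
    [AddCommGroup M] [Module R M] [IsAddTorsionFree M] {a b : Module.End R M}
    (hbraid : a * b * a = b * a * b) {t : M} (ha : a t = t) (hb : b t = -t) : t = 0 := by
  have h := LinearMap.congr_fun hbraid t
  simp only [Module.End.mul_apply, ha, hb, map_neg, neg_neg] at h
  exact self_eq_neg.mp h.symm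

theorem Module.End.range_one_add_le_ker_sub_one {R M : Type*} [Ring R] [AddCommGroup M]
    [Module R M] {σ : Module.End R M} (h : σ * σ = 1) :
    LinearMap.range (1 + σ) ≤ LinearMap.ker (σ - 1) := by
  rintro _ ⟨y, rfl⟩
  have : (σ - 1) * (1 + σ) = σ * σ - 1 := by noncomm_ring
  rw [LinearMap.mem_ker, ← Module.End.mul_apply, this, h, sub_self, LinearMap.zero_apply]

theorem LinearMap.bijOn_of_finrank_eq {K M N : Type*} [DivisionRing K] [AddCommGroup M]
    [Module K M] [AddCommGroup N] [Module K N] [FiniteDimensional K M] [FiniteDimensional K N]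
    (f : M →ₗ[K] N) {A : Submodule K M} {B : Submodule K N} (hmaps : ∀ x ∈ A, f x ∈ B)
    (hker : ∀ x ∈ A, f x = 0 → x = 0) (hdim : Module.finrank K A = Module.finrank K B) :
    Set.BijOn f A B := by
  have hinj : Function.Injective (f.restrict hmaps) := by
    rw [← LinearMap.ker_eq_bot, LinearMap.ker_eq_bot']
    exact fun x hx => Subtype.ext (hker x x.2 (congrArg Subtype.val hx))
  have hsurj := (LinearMap.injective_iff_surjective_of_finrank_eq_finrank hdim).mp hinj
  refine ⟨hmaps, fun x hx y hy hxy => ?_, fun y hy => ?_⟩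
  · exact congrArg Subtype.val (@hinj ⟨x, hx⟩ ⟨y, hy⟩ (Subtype.ext hxy))
  · obtain ⟨x, hx⟩ := hsurj ⟨y, hy⟩
    exact ⟨x, x.2, congrArg Subtype.val hx⟩

section

variable {V : Type} [AddCommGroup V] [Module ℂ V]

theorem sigma23_symmetrizer_apply (σ : Module.End ℂ (V ⊗[ℂ] V)) (t : (V ⊗[ℂ] V) ⊗[ℂ] V) :
    sigma23 ((2 : ℂ)⁻¹ • (1 + σ)) t = (2 : ℂ)⁻¹ • (t + sigma23 σ t) := by
  suffices sigma23 ((2 : ℂ)⁻¹ • (1 + σ)) = (2 : ℂ)⁻¹ • (1 + sigma23 σ) by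
    rw [this]; rfl
  ext x y z
  simp [sigma23, TensorProduct.tmul_add, TensorProduct.tmul_smul]

theorem sigma12_apply_of_mem_subSV {σ : Module.End ℂ (V ⊗[ℂ] V)} {S : Submodule ℂ (V ⊗[ℂ] V)}
    (hσ : ∀ s ∈ S, σ s = s) {x : (V ⊗[ℂ] V) ⊗[ℂ] V} (hx : x ∈ subSV S) : sigma12 σ x = x := by
  obtain ⟨z, rfl⟩ := hx
  have hσS : σ ∘ₗ S.subtype = S.subtype := LinearMap.ext fun s => hσ s s.2
  rw [sigma12, ← LinearMap.comp_apply, ← TensorProduct.map_comp, hσS, LinearMap.id_comp]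

theorem sigma23_apply_mem_subVS {P : Module.End ℂ (V ⊗[ℂ] V)} {S : Submodule ℂ (V ⊗[ℂ] V)}
    (hP : LinearMap.range P ≤ S) (x : (V ⊗[ℂ] V) ⊗[ℂ] V) : sigma23 P x ∈ subVS S := by
  let P' := P.codRestrict S fun y => hP ⟨y, rfl⟩
  have hfac : P = S.subtype ∘ₗ P' := rfl
  rw [subVS, LinearMap.mem_range]
  refine ⟨TensorProduct.map LinearMap.id P' (TensorProduct.assoc ℂ V V V x), ?_⟩
  rw [LinearMap.comp_apply, ← LinearMap.comp_apply (TensorProduct.map _ S.subtype),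
    ← TensorProduct.map_comp, LinearMap.id_comp, ← hfac]
  rfl

theorem finrank_subSV (S : Submodule ℂ (V ⊗[ℂ] V)) :
    Module.finrank ℂ (subSV S) = Module.finrank ℂ S * Module.finrank ℂ V := by
  rw [subSV, LinearMap.finrank_range_of_inj, Module.finrank_tensorProduct]
  exact Module.Flat.rTensor_preserves_injective_linearMap _ S.injective_subtype

theorem finrank_subVS (S : Submodule ℂ (V ⊗[ℂ] V)) :
    Module.finrank ℂ (subVS S) = Module.finrank ℂ V * Module.finrank ℂ S := by
  rw [subVS, LinearMap.finrank_range_of_inj, Module.finrank_tensorProduct]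
  exact (TensorProduct.assoc ℂ V V V).symm.injective.comp
    (Module.Flat.lTensor_preserves_injective_linearMap _ S.injective_subtype)

end

/-- For an involutive braiding `σ` with symmetrizer `P = (1+σ)/2` and `S = ker (σ - 1)`,
the map `P₂₃ = id ⊗ P` restricts to a linear isomorphism from `S ⊗ V` onto `V ⊗ S`. -/
theorem stmt7 {V : Type} [AddCommGroup V] [Module ℂ V] [FiniteDimensional ℂ V]
    (σ : Module.End ℂ (V ⊗[ℂ] V))
    (hinv : σ * σ = 1)
    (hbraid : sigma12 σ * sigma23 σ * sigma12 σ = sigma23 σ * sigma12 σ * sigma23 σ)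
    (P : Module.End ℂ (V ⊗[ℂ] V))
    (hP : P = (2 : ℂ)⁻¹ • (1 + σ)) :
    Set.BijOn (fun x => sigma23 P x)
      (subSV (LinearMap.ker (σ - 1)) : Set ((V ⊗[ℂ] V) ⊗[ℂ] V))
      (subVS (LinearMap.ker (σ - 1)) : Set ((V ⊗[ℂ] V) ⊗[ℂ] V)) := by
  subst hP
  have := IsAddTorsionFree.of_isTorsionFree ℂ ((V ⊗[ℂ] V) ⊗[ℂ] V)
  have hfix : ∀ s ∈ LinearMap.ker (σ - 1), σ s = s := fun s hs => sub_eq_zero.mp hs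
  refine LinearMap.bijOn_of_finrank_eq _ (fun x _ => sigma23_apply_mem_subVS ?_ x)
    (fun t ht h0 => ?_) (by rw [finrank_subSV, finrank_subVS, mul_comm])
  · rw [LinearMap.range_smul _ _ (inv_ne_zero two_ne_zero)]
    exact Module.End.range_one_add_le_ker_sub_one hinv
  · have hanti : sigma23 σ t = -t := by
      rw [sigma23_symmetrizer_apply, smul_eq_zero] at h0
      exact eq_neg_of_add_eq_zero_right (h0.resolve_left (inv_ne_zero two_ne_zero))
    exact Module.End.eq_zero_of_braid_of_apply_eq_self_of_apply_eq_neg hbraid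
      (sigma12_apply_of_mem_subSV hfix ht) hanti
end

section
/- Let V be a finite-dimensional complex vector space and σ : V ⊗ V → V ⊗ V a braiding with σ² = 1 (as in the previous setup), P = (1+σ)/2, S = ker(σ - 1). If X ∈ S ⊗ V ⊆ V ⊗ V ⊗ V satisfies (id ⊗ P)(X) = 0, then X = 0. (Key injectivity step: from σ₁₂X = X and σ₂₃X = -X together with the braid relation, conclude X = 0.) -/
open scoped TensorProduct

/-- Key injectivity step: if `X ∈ S ⊗ V` and `(id ⊗ P)(X) = 0`, then `X = 0`, for an
involutive braiding `σ`, `P = (1+σ)/2` and `S = ker (σ - 1)`. -/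
theorem stmt8 {V : Type} [AddCommGroup V] [Module ℂ V] [FiniteDimensional ℂ V]
    (σ : Module.End ℂ (V ⊗[ℂ] V))
    (hinv : σ * σ = 1)
    (hbraid : sigma12 σ * sigma23 σ * sigma12 σ = sigma23 σ * sigma12 σ * sigma23 σ)
    (P : Module.End ℂ (V ⊗[ℂ] V))
    (hP : P = (2 : ℂ)⁻¹ • (1 + σ))
    (X : (V ⊗[ℂ] V) ⊗[ℂ] V)
    (hX : X ∈ subSV (LinearMap.ker (σ - 1)))
    (hPX : sigma23 P X = 0) :
    X = 0 := by
  -- σ₁₂ fixes X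
  have h12 : sigma12 σ X = X := by
    obtain ⟨Y, rfl⟩ := hX
    have hcomp : sigma12 σ ∘ₗ
        TensorProduct.map (LinearMap.ker (σ - 1)).subtype (LinearMap.id (R := ℂ) (M := V)) =
        TensorProduct.map (LinearMap.ker (σ - 1)).subtype (LinearMap.id (R := ℂ) (M := V)) := by
      rw [sigma12, ← TensorProduct.map_comp]
      congr 1
      ext x
      have hx : (σ - 1) (x : V ⊗[ℂ] V) = 0 := x.2
      rw [LinearMap.sub_apply, Module.End.one_apply, sub_eq_zero] at hx
      simpa using hx
    exact LinearMap.congr_fun hcomp Y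
  -- σ₂₃ negates X
  have h1 : sigma23 (1 : Module.End ℂ (V ⊗[ℂ] V)) = 1 := by
    unfold sigma23
    apply LinearMap.ext; intro x
    simp [Module.End.one_eq_id, TensorProduct.map_id]
  have hP23 : sigma23 P = (2 : ℂ)⁻¹ • (1 + sigma23 σ) := by
    rw [hP]
    unfold sigma23
    rw [TensorProduct.map_smul_right, TensorProduct.map_add_right]
    apply LinearMap.ext; intro x
    simp only [LinearMap.comp_apply, LinearMap.smul_apply, LinearMap.add_apply, map_add,
      map_smul, Module.End.one_apply]
    simp [Module.End.one_eq_id, TensorProduct.map_id]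
  have h23 : sigma23 σ X = -X := by
    rw [hP23] at hPX
    simp only [LinearMap.smul_apply, LinearMap.add_apply, Module.End.one_apply] at hPX
    have h2ne : (2 : ℂ)⁻¹ ≠ 0 := by norm_num
    have hz : X + sigma23 σ X = 0 := (smul_eq_zero.mp hPX).resolve_left h2ne
    exact (neg_eq_of_add_eq_zero_right hz).symm
  -- braid relation applied to X gives -X = X
  have hb := LinearMap.congr_fun hbraid X
  simp only [Module.End.mul_apply, h12, h23, map_neg] at hb
  -- hb : -X = X (after simplification)
  have hXX : X + X = 0 := by
    have hnx : -X = X := by simpa [h12, h23] using hb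
    exact add_eq_zero_iff_eq_neg.mpr hnx.symm
  have h2 : (2 : ℂ) • X = 0 := by
    rw [two_smul]; exact hXX
  have h2ne : (2 : ℂ) ≠ 0 := by norm_num
  exact (smul_eq_zero.mp h2).resolve_left h2ne
end

section
/- Let V be a finite-dimensional complex vector space, σ : V ⊗ V → V ⊗ V an involutive braiding (σ² = 1, braid equation), S = ker(σ - 1), and g a non-degenerate bilinear form on V such that g ∘ σ = g and such that σ is g⁽²⁾-self-adjoint. Then the map Φ : Hom(V, S) → Hom(S, V), Φ(L) = (id ⊗ g)(L ⊗ id)|_S, is a linear isomorphism. -/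
open scoped TensorProduct

/-- The contraction `(id ⊗ g) : (V ⊗ V) ⊗ V → V`, `(v ⊗ w) ⊗ u ↦ g(w ⊗ u) • v`. -/
noncomputable def contract {V : Type} [AddCommGroup V] [Module ℂ V]
    (g : V ⊗[ℂ] V →ₗ[ℂ] ℂ) : (V ⊗[ℂ] V) ⊗[ℂ] V →ₗ[ℂ] V :=
  (TensorProduct.rid ℂ V).toLinearMap ∘ₗ (TensorProduct.map LinearMap.id g) ∘ₗ
    (TensorProduct.assoc ℂ V V V).toLinearMap

/-!
Φ is a linear map between spaces of the same dimension `dim V · dim S`, so it suffices to show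
that it is injective. If `Φ(L) = 0`, then `C = (id ⊗ g)(L ⊗ id)` vanishes on `S`, hence
`C ∘ σ = -C` because `x + σ x ∈ S`. The functional `F = g ∘ (C ⊗ id)` on `V ⊗ V ⊗ V` is
therefore anti-invariant under `σ₁₂`, while `g⁽²⁾`-self-adjointness of `σ` and `σ ∘ L = L` make it
invariant under `σ₂₃`. Evaluating `F` on both sides of the braid relation gives `F = -F`, so
`F = 0`, and non-degeneracy of `g` turns this into `C = 0` and then `L = 0`.
-/

open TensorProduct LinearMap

namespace LinearMap

variable {R E W : Type*} [CommRing R] [AddCommGroup E] [Module R E] [AddCommGroup W] [Module R W]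

theorem comp_eq_neg_of_ker_sub_one_le_ker {σ : Module.End R E} (hσ : σ * σ = 1)
    {C : E →ₗ[R] W} (hC : ker (σ - 1) ≤ ker C) : C ∘ₗ σ = -C := by
  ext x
  have hx : x + σ x ∈ ker (σ - 1) := by
    simp [← Module.End.mul_apply, hσ, add_comm]
  have := hC hx
  rw [mem_ker, map_add] at this
  simpa using (eq_neg_of_add_eq_zero_right this)

theorem eq_zero_of_braid_relation [IsAddTorsionFree W] {s t : Module.End R E}
    (hbraid : s * t * s = t * s * t) {F : E →ₗ[R] W} (hs : F ∘ₗ s = -F) (ht : F ∘ₗ t = F) :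
    F = 0 := by
  have hsts : F ∘ₗ (s * t * s) = F := by
    simp only [Module.End.mul_eq_comp, ← comp_assoc, hs, ht, neg_comp, neg_neg]
  have htst : F ∘ₗ (t * s * t) = -F := by
    simp only [Module.End.mul_eq_comp, ← comp_assoc, hs, ht, neg_comp]
  ext z
  have h := congr($(hsts.symm.trans (hbraid ▸ htst)) z)
  exact self_eq_neg.mp h

end LinearMap

theorem separatingLeft_curry_of_isUnit {R V ι : Type*} [CommRing R] [IsDomain R] [Fintype ι]
    [DecidableEq ι] [AddCommGroup V] [Module R V] (b : Module.Basis ι R V) {g : V ⊗[R] V →ₗ[R] R}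
    (hG : IsUnit (Matrix.of fun i j => g (b i ⊗ₜ[R] b j))) : (curry g).SeparatingLeft := by
  refine (separatingLeft_iff_det_ne_zero b).2 ?_
  convert ((Matrix.isUnit_iff_isUnit_det _).1 hG).ne_zero
  ext i j
  simp [toMatrix₂_apply]

section Contraction

variable {V : Type} [AddCommGroup V] [Module ℂ V] {g : V ⊗[ℂ] V →ₗ[ℂ] ℂ}

@[simp]
theorem contract_tmul (a c u : V) : contract g ((a ⊗ₜ[ℂ] c) ⊗ₜ[ℂ] u) = g (c ⊗ₜ[ℂ] u) • a := by
  simp [contract]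

theorem eq_zero_of_forall_contract_tmul_eq_zero [Module.Finite ℂ V] (hg : (curry g).SeparatingLeft)
    {x : V ⊗[ℂ] V} (hx : ∀ d, contract g (x ⊗ₜ[ℂ] d) = 0) : x = 0 := by
  have hfactor : (mk ℂ _ V).compr₂ (contract g) = dualTensorHom ℂ V V ∘ₗ
      (TensorProduct.comm ℂ V (Module.Dual ℂ V)).toLinearMap ∘ₗ lTensor V (curry g) := by
    ext a c d
    simp [dualTensorHom_apply]
  have hinj : Function.Injective ((mk ℂ _ V).compr₂ (contract g)) := by
    rw [hfactor]
    exact dualTensorHom_bijective.1.comp ((TensorProduct.comm _ _ _).injective.comp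
      (Module.Flat.lTensor_preserves_injective_linearMap _
        (ker_eq_bot.1 (separatingLeft_iff_ker_eq_bot.1 hg))))
  exact hinj (by ext d; simpa using hx d)

end Contraction

section Braiding

variable {V : Type} [AddCommGroup V] [Module ℂ V] {σ : Module.End ℂ (V ⊗[ℂ] V)}
  {g : V ⊗[ℂ] V →ₗ[ℂ] ℂ} {g2 : (V ⊗[ℂ] V) ⊗[ℂ] (V ⊗[ℂ] V) →ₗ[ℂ] ℂ}

theorem apply_contract_tmul_tmul
    (hg2 : ∀ a c d e : V, g2 ((a ⊗ₜ[ℂ] c) ⊗ₜ[ℂ] (d ⊗ₜ[ℂ] e)) = g (c ⊗ₜ[ℂ] d) * g (a ⊗ₜ[ℂ] e))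
    (x : V ⊗[ℂ] V) (d e : V) : g (contract g (x ⊗ₜ[ℂ] d) ⊗ₜ[ℂ] e) = g2 (x ⊗ₜ[ℂ] (d ⊗ₜ[ℂ] e)) := by
  induction x using TensorProduct.induction_on with
  | zero => simp
  | tmul a c => rw [contract_tmul, ← smul_tmul', map_smul, smul_eq_mul, hg2]
  | add y z hy hz => simp only [add_tmul, map_add, hy, hz]

theorem comp_map_contract_comp_assoc_symm
    (hg2 : ∀ a c d e : V, g2 ((a ⊗ₜ[ℂ] c) ⊗ₜ[ℂ] (d ⊗ₜ[ℂ] e)) = g (c ⊗ₜ[ℂ] d) * g (a ⊗ₜ[ℂ] e))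
    (L : V →ₗ[ℂ] V ⊗[ℂ] V) :
    g ∘ₗ map (contract g ∘ₗ map L id) id ∘ₗ (TensorProduct.assoc ℂ V V V).symm.toLinearMap
      = g2 ∘ₗ map L id := by
  ext v d e
  simp [apply_contract_tmul_tmul hg2]

theorem comp_map_contract_comp_sigma23
    (hg2 : ∀ a c d e : V, g2 ((a ⊗ₜ[ℂ] c) ⊗ₜ[ℂ] (d ⊗ₜ[ℂ] e)) = g (c ⊗ₜ[ℂ] d) * g (a ⊗ₜ[ℂ] e))
    (hsa : ∀ x y : V ⊗[ℂ] V, g2 (σ x ⊗ₜ[ℂ] y) = g2 (x ⊗ₜ[ℂ] σ y))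
    {L : V →ₗ[ℂ] V ⊗[ℂ] V} (hL : ∀ v, σ (L v) = L v) :
    g ∘ₗ map (contract g ∘ₗ map L id) id ∘ₗ sigma23 σ = g ∘ₗ map (contract g ∘ₗ map L id) id := by
  refine ext_threefold fun v d e => ?_
  have h := congr($(comp_map_contract_comp_assoc_symm hg2 L) (v ⊗ₜ[ℂ] σ (d ⊗ₜ[ℂ] e)))
  simp only [comp_apply, LinearEquiv.coe_coe, map_tmul, id_apply] at h
  simp only [sigma23, comp_apply, LinearEquiv.coe_coe, assoc_tmul, map_tmul, id_apply]
  rw [h, apply_contract_tmul_tmul hg2, ← hsa, hL]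

theorem eq_zero_of_ker_sub_one_le_ker_contract_map [Module.Finite ℂ V] (hinv : σ * σ = 1)
    (hbraid : sigma12 σ * sigma23 σ * sigma12 σ = sigma23 σ * sigma12 σ * sigma23 σ)
    (hg : (curry g).SeparatingLeft)
    (hg2 : ∀ a c d e : V, g2 ((a ⊗ₜ[ℂ] c) ⊗ₜ[ℂ] (d ⊗ₜ[ℂ] e)) = g (c ⊗ₜ[ℂ] d) * g (a ⊗ₜ[ℂ] e))
    (hsa : ∀ x y : V ⊗[ℂ] V, g2 (σ x ⊗ₜ[ℂ] y) = g2 (x ⊗ₜ[ℂ] σ y))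
    {L : V →ₗ[ℂ] V ⊗[ℂ] V} (hL : ∀ v, σ (L v) = L v)
    (hker : ker (σ - 1) ≤ ker (contract g ∘ₗ map L id)) : L = 0 := by
  set C := contract g ∘ₗ map L id
  have hCσ : C ∘ₗ σ = -C := comp_eq_neg_of_ker_sub_one_le_ker hinv hker
  have h12 : g ∘ₗ map C id ∘ₗ sigma12 σ = -(g ∘ₗ map C id) := by
    rw [sigma12, ← map_comp, comp_id, hCσ]
    ext; simp [neg_tmul]
  have hF : g ∘ₗ map C id = 0 :=
    eq_zero_of_braid_relation hbraid h12 (comp_map_contract_comp_sigma23 hg2 hsa hL)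
  have hC : C = 0 :=
    LinearMap.ext fun x => hg _ fun e => by simpa using congr($hF (x ⊗ₜ[ℂ] e))
  ext v : 1
  exact eq_zero_of_forall_contract_tmul_eq_zero hg fun d => by
    simpa [C] using congr($hC (v ⊗ₜ[ℂ] d))

-- The paper's `Φ : Hom(V, S) → Hom(S, V)`.
noncomputable def phi (σ : Module.End ℂ (V ⊗[ℂ] V)) (g : V ⊗[ℂ] V →ₗ[ℂ] ℂ) :
    (V →ₗ[ℂ] ker (σ - 1)) →ₗ[ℂ] (ker (σ - 1) →ₗ[ℂ] V) where
  toFun M := (contract g ∘ₗ map ((ker (σ - 1)).subtype ∘ₗ M) id) ∘ₗ (ker (σ - 1)).subtype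
  map_add' M M' := by ext; simp [comp_add, map_add_left]
  map_smul' c M := by ext; simp [comp_smul, map_smul_left]

theorem injective_phi [Module.Finite ℂ V] (hinv : σ * σ = 1)
    (hbraid : sigma12 σ * sigma23 σ * sigma12 σ = sigma23 σ * sigma12 σ * sigma23 σ)
    (hg : (curry g).SeparatingLeft)
    (hg2 : ∀ a c d e : V, g2 ((a ⊗ₜ[ℂ] c) ⊗ₜ[ℂ] (d ⊗ₜ[ℂ] e)) = g (c ⊗ₜ[ℂ] d) * g (a ⊗ₜ[ℂ] e))
    (hsa : ∀ x y : V ⊗[ℂ] V, g2 (σ x ⊗ₜ[ℂ] y) = g2 (x ⊗ₜ[ℂ] σ y)) :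
    Function.Injective (phi σ g) := by
  refine (injective_iff_map_eq_zero _).2 fun M hM => ext fun v => Subtype.ext ?_
  have hL : (ker (σ - 1)).subtype ∘ₗ M = 0 := by
    refine eq_zero_of_ker_sub_one_le_ker_contract_map hinv hbraid hg hg2 hsa (fun v => ?_)
      fun x hx => congr($hM ⟨x, hx⟩)
    have h := mem_ker.1 (M v).2
    rwa [LinearMap.sub_apply, Module.End.one_apply, sub_eq_zero] at h
  exact congr($hL v)

theorem bijective_phi [Module.Finite ℂ V] (hinv : σ * σ = 1)
    (hbraid : sigma12 σ * sigma23 σ * sigma12 σ = sigma23 σ * sigma12 σ * sigma23 σ)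
    (hg : (curry g).SeparatingLeft)
    (hg2 : ∀ a c d e : V, g2 ((a ⊗ₜ[ℂ] c) ⊗ₜ[ℂ] (d ⊗ₜ[ℂ] e)) = g (c ⊗ₜ[ℂ] d) * g (a ⊗ₜ[ℂ] e))
    (hsa : ∀ x y : V ⊗[ℂ] V, g2 (σ x ⊗ₜ[ℂ] y) = g2 (x ⊗ₜ[ℂ] σ y)) :
    Function.Bijective (phi σ g) := by
  set S := ker (σ - 1)
  have hinj := injective_phi hinv hbraid hg hg2 hsa
  have hdim : Module.finrank ℂ (V →ₗ[ℂ] S) = Module.finrank ℂ (S →ₗ[ℂ] V) := by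
    rw [Module.finrank_linearMap, Module.finrank_linearMap, mul_comm]
  exact ⟨hinj, (LinearMap.injective_iff_surjective_of_finrank_eq_finrank
    (V := V →ₗ[ℂ] S) (V₂ := S →ₗ[ℂ] V) hdim).1 hinj⟩

end Braiding

theorem stmt16_general {n : ℕ} {V : Type} [AddCommGroup V] [Module ℂ V]
    (b : Module.Basis (Fin n) ℂ V)
    (σ : Module.End ℂ (V ⊗[ℂ] V))
    (hinv : σ * σ = 1)
    (hbraid : sigma12 σ * sigma23 σ * sigma12 σ = sigma23 σ * sigma12 σ * sigma23 σ)
    (g : V ⊗[ℂ] V →ₗ[ℂ] ℂ)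
    (hG : IsUnit (Matrix.of fun i j => g (b i ⊗ₜ[ℂ] b j)))
    (g2 : (V ⊗[ℂ] V) ⊗[ℂ] (V ⊗[ℂ] V) →ₗ[ℂ] ℂ)
    (hg2 : ∀ a c d e : V,
      g2 ((a ⊗ₜ[ℂ] c) ⊗ₜ[ℂ] (d ⊗ₜ[ℂ] e)) = g (c ⊗ₜ[ℂ] d) * g (a ⊗ₜ[ℂ] e))
    (hsa : ∀ x y : V ⊗[ℂ] V, g2 (σ x ⊗ₜ[ℂ] y) = g2 (x ⊗ₜ[ℂ] σ y)) :
    Function.Bijective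
      (fun L : {L : V →ₗ[ℂ] V ⊗[ℂ] V // ∀ v, L v ∈ LinearMap.ker (σ - 1)} =>
        (contract g ∘ₗ TensorProduct.map L.1 LinearMap.id) ∘ₗ
          (LinearMap.ker (σ - 1)).subtype) := by
  set S := ker (σ - 1)
  have := Module.Finite.of_basis b
  obtain ⟨hinj, hsurj⟩ := bijective_phi hinv hbraid (separatingLeft_curry_of_isUnit b hG) hg2 hsa
  refine ⟨fun L L' h => ?_, fun T => ?_⟩
  · have hM := @hinj (codRestrict S L.1 L.2) (codRestrict S L'.1 L'.2) h
    exact Subtype.ext (ext fun v => congr(($hM v : V ⊗[ℂ] V)))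
  · obtain ⟨M, rfl⟩ := hsurj T
    exact ⟨⟨S.subtype ∘ₗ M, fun v => (M v).2⟩, rfl⟩

/-- For an involutive braiding `σ` with `S = ker (σ - 1)` and a non-degenerate `σ`-invariant
bilinear form `g` whose braiding is `g⁽²⁾`-self-adjoint, the map
`Φ : Hom(V, S) → Hom(S, V)`, `Φ(L) = (id ⊗ g)(L ⊗ id)|_S`, is a linear isomorphism. -/
theorem stmt16 {n : ℕ} {V : Type} [AddCommGroup V] [Module ℂ V]
    (b : Module.Basis (Fin n) ℂ V)
    (σ : Module.End ℂ (V ⊗[ℂ] V))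
    (hinv : σ * σ = 1)
    (hbraid : sigma12 σ * sigma23 σ * sigma12 σ = sigma23 σ * sigma12 σ * sigma23 σ)
    (g : V ⊗[ℂ] V →ₗ[ℂ] ℂ)
    (hG : IsUnit (Matrix.of fun i j => g (b i ⊗ₜ[ℂ] b j)))
    (hgσ : ∀ x : V ⊗[ℂ] V, g (σ x) = g x)
    (g2 : (V ⊗[ℂ] V) ⊗[ℂ] (V ⊗[ℂ] V) →ₗ[ℂ] ℂ)
    (hg2 : ∀ a c d e : V,
      g2 ((a ⊗ₜ[ℂ] c) ⊗ₜ[ℂ] (d ⊗ₜ[ℂ] e)) = g (c ⊗ₜ[ℂ] d) * g (a ⊗ₜ[ℂ] e))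
    (hsa : ∀ x y : V ⊗[ℂ] V, g2 (σ x ⊗ₜ[ℂ] y) = g2 (x ⊗ₜ[ℂ] σ y)) :
    Function.Bijective
      (fun L : {L : V →ₗ[ℂ] V ⊗[ℂ] V // ∀ v, L v ∈ LinearMap.ker (σ - 1)} =>
        (contract g ∘ₗ TensorProduct.map L.1 LinearMap.id) ∘ₗ
          (LinearMap.ker (σ - 1)).subtype) :=
  stmt16_general b σ hinv hbraid g hG g2 hg2 hsa
end
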